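/- arXiv:2602.21579 — 6 statements merged into one kernel-verified Lean document; each statement's English description precedes it below -/
import Mathlib

section
/- Let (R_n)_{n≥1} be a sequence of real-valued random variables on a probability space (Ω, 𝒜, P) such that √n · R_n → 0 almost surely as n → ∞. Then the sequence (R_n) satisfies the uniform continuity in probability (u.c.i.p.) condition. -/
/-!
If `√n · R_n → 0` almost surely then `R_n → 0` almost surely. By Egorov's theorem the
sequence is then uniformly Cauchy off a set of probability `< ε`, say from index `M` on.
With `ν = 1/2` and `n ≥ 2M`, every `n'` with `|n' - n| ≤ n/2` satisfies `n' ≥ M` too, so the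
u.c.i.p. event lies in that exceptional set.
-/

open MeasureTheory Filter Topology

/-- A sequence `Y` of real-valued random variables satisfies the
*uniform continuity in probability* (u.c.i.p.) condition: for every `ε > 0`
there exist `ν ∈ (0,1)` and `n₀ ∈ ℕ` such that for every `n ≥ n₀`,
`P( max_{n' : |n' − n| ≤ ν n} |Y_{n'} − Y_n| ≥ ε ) < ε`. -/
def UCIP {Ω : Type*} [MeasurableSpace Ω] (P : Measure Ω) (Y : ℕ → Ω → ℝ) : Prop :=
  ∀ ε : ℝ, 0 < ε → ∃ ν : ℝ, ν ∈ Set.Ioo (0 : ℝ) 1 ∧ ∃ n₀ : ℕ, ∀ n : ℕ, n₀ ≤ n →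
    P {x | ∃ n' : ℕ, |(n' : ℝ) - (n : ℝ)| ≤ ν * n ∧ ε ≤ |Y n' x - Y n x|} <
      ENNReal.ofReal ε

lemma tendsto_zero_of_sqrt_mul_tendsto_zero {a : ℕ → ℝ}
    (h : Tendsto (fun n : ℕ => Real.sqrt n * a n) atTop (𝓝 0)) : Tendsto a atTop (𝓝 0) := by
  have hinv : Tendsto (fun n : ℕ => (Real.sqrt n)⁻¹) atTop (𝓝 0) :=
    tendsto_inv_atTop_zero.comp (Real.tendsto_sqrt_atTop.comp tendsto_natCast_atTop_atTop)
  have hprod := hinv.mul h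
  rw [zero_mul] at hprod
  refine hprod.congr' ?_
  filter_upwards [eventually_ge_atTop 1] with n hn
  have : Real.sqrt n ≠ 0 := by positivity
  rw [inv_mul_cancel_left₀ this]

lemma le_of_abs_sub_le_half_mul {M n n' : ℕ} (hn : 2 * M ≤ n)
    (hn' : |(n' : ℝ) - n| ≤ 1 / 2 * n) : M ≤ n' := by
  have hn : (2 * M : ℝ) ≤ n := by exact_mod_cast hn
  have : (M : ℝ) ≤ n' := by linarith [(abs_le.1 hn').1]
  exact_mod_cast this

theorem ucip_of_tendsto_ae {Ω : Type*} [MeasurableSpace Ω] (P : Measure Ω) [IsFiniteMeasure P]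
    {Y : ℕ → Ω → ℝ} {g : Ω → ℝ} (hY : ∀ n, StronglyMeasurable (Y n)) (hg : StronglyMeasurable g)
    (h : ∀ᵐ x ∂P, Tendsto (fun n => Y n x) atTop (𝓝 (g x))) : UCIP P Y := by
  intro ε hε
  obtain ⟨t, -, hPt, hunif⟩ := tendstoUniformlyOn_of_ae_tendsto' hY hg h (half_pos hε)
  obtain ⟨M, hM⟩ := Metric.uniformCauchySeqOn_iff.1 hunif.uniformCauchySeqOn ε hε
  refine ⟨1 / 2, ⟨by norm_num, by norm_num⟩, 2 * M, fun n hn => ?_⟩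
  have hsub : {x | ∃ n' : ℕ, |(n' : ℝ) - n| ≤ 1 / 2 * n ∧ ε ≤ |Y n' x - Y n x|} ⊆ t := by
    rintro x ⟨n', hn', hbig⟩
    by_contra hx
    have hclose := hM n' (le_of_abs_sub_le_half_mul hn hn') n (by omega) x hx
    rw [Real.dist_eq] at hclose
    linarith
  calc P _ ≤ P t := measure_mono hsub
    _ ≤ ENNReal.ofReal (ε / 2) := hPt
    _ < ENNReal.ofReal ε := (ENNReal.ofReal_lt_ofReal_iff hε).2 (half_lt_self hε)

/-- If `√n · R_n → 0` almost surely, then `(R_n)` satisfies the u.c.i.p. condition. -/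
theorem ucip_of_sqrt_mul_tendsto_ae {Ω : Type*} [MeasurableSpace Ω]
    (P : Measure Ω) [IsProbabilityMeasure P]
    (R : ℕ → Ω → ℝ) (hmeas : ∀ n, Measurable (R n))
    (h : ∀ᵐ x ∂P, Tendsto (fun n : ℕ => Real.sqrt n * R n x) atTop (𝓝 0)) :
    UCIP P R :=
  ucip_of_tendsto_ae P (fun n => (hmeas n).stronglyMeasurable) stronglyMeasurable_const
    (h.mono fun _ hx => tendsto_zero_of_sqrt_mul_tendsto_zero hx)
end

section
/- Let (Y_n)_{n≥1} be a sequence of real-valued random variables on a probability space (Ω, 𝒜, P) satisfying the uniform continuity in probability (u.c.i.p.) condition. Let (n_k)_{k≥1} be positive integers with n_k → ∞, and let (N_k)_{k≥1} be measurable ℕ-valued random variables such that N_k / n_k → 1 in probability as k → ∞. Then Y_{N_k} − Y_{n_k} → 0 in probability as k → ∞. -/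
open MeasureTheory Filter Topology

/-!
On the event `|N_k / n_k - 1| < ν` the random index `N_k` lies in the window
`|n' - n_k| ≤ ν n_k`, so there `|Y_{N_k} - Y_{n_k}| ≥ η` forces the maximal oscillation of `Y`
over that window to be at least `η`. Hence `P(|Y_{N_k} - Y_{n_k}| ≥ η)` is at most
`P(|N_k / n_k - 1| ≥ ν)` plus the u.c.i.p. probability at `n_k`, and both are eventually small.
-/

theorem ENNReal.tendsto_nhds_zero_of_eventually_le_ofReal {α : Type*} {l : Filter α}
    {f : α → ENNReal} (h : ∀ δ : ℝ, 0 < δ → ∀ᶠ a in l, f a ≤ ENNReal.ofReal δ) :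
    Tendsto f l (𝓝 0) := by
  refine ENNReal.tendsto_nhds_zero.2 fun ε hε => ?_
  obtain ⟨δ, -, hδ, hδε⟩ := ENNReal.lt_iff_exists_real_btwn.1 hε
  filter_upwards [h δ (ENNReal.ofReal_pos.1 hδ)] with a ha
  exact ha.trans hδε.le

theorem abs_sub_le_mul_of_abs_div_sub_one_le {a b ν : ℝ} (hb : 0 < b)
    (h : |a / b - 1| ≤ ν) : |a - b| ≤ ν * b := by
  have hab : a - b = (a / b - 1) * b := by field_simp
  rw [hab, abs_mul, abs_of_pos hb]
  exact mul_le_mul_of_nonneg_right h hb.le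

theorem measure_le_ratio_deviation_add_oscillation {Ω : Type*} [MeasurableSpace Ω]
    (P : Measure Ω) (Y : ℕ → Ω → ℝ) (N : Ω → ℕ) {m : ℕ} (hm : 0 < m) {η ε ν : ℝ}
    (hεη : ε ≤ η) :
    P {x | η ≤ |Y (N x) x - Y m x|} ≤
      P {x | ν ≤ |(N x : ℝ) / m - 1|} +
        P {x | ∃ n' : ℕ, |(n' : ℝ) - m| ≤ ν * m ∧ ε ≤ |Y n' x - Y m x|} := by
  refine (measure_mono fun x hx => ?_).trans (measure_union_le _ _)
  by_cases hratio : ν ≤ |(N x : ℝ) / m - 1|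
  · exact Or.inl hratio
  · exact Or.inr ⟨N x, abs_sub_le_mul_of_abs_div_sub_one_le (Nat.cast_pos.2 hm)
      (not_le.1 hratio).le, hεη.trans hx⟩

theorem random_index_diff_tendsto_zero_of_ucip_general {Ω : Type*} [MeasurableSpace Ω]
    (P : Measure Ω)
    (Y : ℕ → Ω → ℝ) (hY : UCIP P Y)
    (n : ℕ → ℕ) (hpos : ∀ k, 0 < n k) (hn : Tendsto n atTop atTop)
    (N : ℕ → Ω → ℕ)
    (hN : ∀ ε : ℝ, 0 < ε →
      Tendsto (fun k => P {x | ε ≤ |(N k x : ℝ) / (n k : ℝ) - 1|}) atTop (𝓝 0)) :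
    ∀ η : ℝ, 0 < η →
      Tendsto (fun k => P {x | η ≤ |Y (N k x) x - Y (n k) x|}) atTop (𝓝 0) := by
  intro η hη
  refine ENNReal.tendsto_nhds_zero_of_eventually_le_ofReal fun δ hδ => ?_
  obtain ⟨ν, hν, n₀, hosc⟩ := hY (min η (δ / 2)) (by positivity)
  have hratio : ∀ᶠ k in atTop,
      P {x | ν ≤ |(N k x : ℝ) / (n k : ℝ) - 1|} < ENNReal.ofReal (δ / 2) :=
    (hN ν hν.1).eventually_lt_const (by positivity)
  filter_upwards [hn.eventually_ge_atTop n₀, hratio] with k hk hratio_k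
  calc P {x | η ≤ |Y (N k x) x - Y (n k) x|}
      ≤ P {x | ν ≤ |(N k x : ℝ) / (n k : ℝ) - 1|} +
          P {x | ∃ n' : ℕ, |(n' : ℝ) - n k| ≤ ν * n k ∧
            min η (δ / 2) ≤ |Y n' x - Y (n k) x|} :=
        measure_le_ratio_deviation_add_oscillation P Y (N k) (hpos k) (min_le_left _ _)
    _ ≤ ENNReal.ofReal (δ / 2) + ENNReal.ofReal (δ / 2) :=
        add_le_add hratio_k.le
          ((hosc (n k) hk).le.trans (ENNReal.ofReal_le_ofReal (min_le_right _ _)))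
    _ = ENNReal.ofReal δ := by
        rw [← ENNReal.ofReal_add (by positivity) (by positivity), add_halves]

/-- If `(Y_n)` satisfies the u.c.i.p. condition, `n_k → ∞` are positive integers,
and `N_k` are random indices with `N_k / n_k → 1` in probability, then
`Y_{N_k} − Y_{n_k} → 0` in probability. -/
theorem random_index_diff_tendsto_zero_of_ucip {Ω : Type*} [MeasurableSpace Ω]
    (P : Measure Ω) [IsProbabilityMeasure P]
    (Y : ℕ → Ω → ℝ) (hYmeas : ∀ n, Measurable (Y n)) (hY : UCIP P Y)
    (n : ℕ → ℕ) (hpos : ∀ k, 0 < n k) (hn : Tendsto n atTop atTop)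
    (N : ℕ → Ω → ℕ) (hNmeas : ∀ k, Measurable (N k))
    (hN : ∀ ε : ℝ, 0 < ε →
      Tendsto (fun k => P {x | ε ≤ |(N k x : ℝ) / (n k : ℝ) - 1|}) atTop (𝓝 0)) :
    ∀ η : ℝ, 0 < η →
      Tendsto (fun k => P {x | η ≤ |Y (N k x) x - Y (n k) x|}) atTop (𝓝 0) :=
  random_index_diff_tendsto_zero_of_ucip_general P Y hY n hpos hn N hN
end

section
/- Let a > 0, δ > 0, L > 0, and let (v_n)_{n≥1} be nonnegative reals with v_n → L as n → ∞. Let m : (0,∞) → ℕ satisfy m(ω) ≥ 1 for all ω and ω² m(ω) → 0 as ω → 0⁺. For each ω > 0 define N(ω) = inf{ n ∈ ℕ : n ≥ m(ω) and n ≥ (a/ω²)(v_n + n^{−δ}) }. Then ω² N(ω) → a L as ω → 0⁺ (equivalently, N(ω)/C(ω) → 1 where C(ω) = a L / ω²). -/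
/-!
Write `u n = v n + n ^ (-δ)`, so that `u n → L`. The index `N` belongs to the stopping set, so
`A u N ≤ N`; and either `N = m` or `N - 1 ≥ m` fails the rule, so `N ≤ max m (A u (N - 1) + 1)`.
The first inequality forces `A ≤ N ^ (1 + δ)`, hence `N → ∞` as `A = a / ω² → ∞`, and dividing
both inequalities by `A` squeezes `N / A` between quantities tending to `L` (using `m / A → 0`
and `L ≥ 0`). Finally `ω² N = a (N / A)`.
-/

open Filter Topology

/-- The set defining the stopping rule: integers `n ≥ m` with
`n ≥ A (v_n + n^{−δ})`. -/
def stopSet (A δ : ℝ) (m : ℕ) (v : ℕ → ℝ) : Set ℕ :=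
  {n : ℕ | m ≤ n ∧ A * (v n + (n : ℝ) ^ (-δ)) ≤ (n : ℝ)}

/-- The stopping index `N = inf{ n ∈ ℕ : n ≥ m and n ≥ A (v_n + n^{−δ}) }`. -/
noncomputable def stopIndex (A δ : ℝ) (m : ℕ) (v : ℕ → ℝ) : ℕ :=
  sInf (stopSet A δ m v)

section

variable {A δ : ℝ} {m : ℕ} {v : ℕ → ℝ}

theorem stopSet_nonempty (hA : 0 ≤ A) (hδ : 0 ≤ δ) (hv : BddAbove (Set.range v)) :
    (stopSet A δ m v).Nonempty := by
  obtain ⟨B, hB⟩ := hv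
  set n := max (max m 1) ⌈A * (B + 1)⌉₊
  have hn : (1 : ℝ) ≤ n := by exact_mod_cast (le_max_right m 1).trans (le_max_left _ _)
  refine ⟨n, (le_max_left m 1).trans (le_max_left _ _), ?_⟩
  calc A * (v n + (n : ℝ) ^ (-δ)) ≤ A * (B + 1) := by
        gcongr
        · exact hB ⟨n, rfl⟩
        · exact Real.rpow_le_one_of_one_le_of_nonpos hn (by linarith)
    _ ≤ ⌈A * (B + 1)⌉₊ := Nat.le_ceil _
    _ ≤ n := by exact_mod_cast le_max_right _ _

theorem stopIndex_mem (h : (stopSet A δ m v).Nonempty) : stopIndex A δ m v ∈ stopSet A δ m v :=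
  Nat.sInf_mem h

theorem lt_of_le_of_lt_stopIndex {n : ℕ} (hmn : m ≤ n) (hnN : n < stopIndex A δ m v) :
    (n : ℝ) < A * (v n + (n : ℝ) ^ (-δ)) := by
  by_contra! h
  exact Nat.notMem_of_lt_sInf hnN ⟨hmn, h⟩

theorem stopIndex_le_max :
    (stopIndex A δ m v : ℝ) ≤ max (m : ℝ)
      (A * (v (stopIndex A δ m v - 1) + ((stopIndex A δ m v - 1 : ℕ) : ℝ) ^ (-δ)) + 1) := by
  set N := stopIndex A δ m v
  rcases le_or_gt N m with hNm | hmN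
  · exact le_max_of_le_left (by exact_mod_cast hNm)
  · have hpred : ((N - 1 : ℕ) : ℝ) < A * (v (N - 1) + ((N - 1 : ℕ) : ℝ) ^ (-δ)) :=
      lt_of_le_of_lt_stopIndex (Nat.le_sub_one_of_lt hmN) (Nat.sub_one_lt_of_lt hmN)
    have hcast : ((N - 1 : ℕ) : ℝ) = N - 1 := by rw [Nat.cast_pred (by omega)]
    exact le_max_of_le_right (by linarith)

theorem le_rpow_stopIndex (hA : 0 ≤ A) (hm : 1 ≤ m) (hv : ∀ n, 0 ≤ v n)
    (h : (stopSet A δ m v).Nonempty) : A ≤ (stopIndex A δ m v : ℝ) ^ (1 + δ) := by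
  obtain ⟨hmN, hN⟩ := stopIndex_mem h
  set N := stopIndex A δ m v
  have hNpos : (0 : ℝ) < N := by exact_mod_cast hm.trans hmN
  have hAN : A * (N : ℝ) ^ (-δ) ≤ N :=
    le_trans (by gcongr; linarith [hv N]) hN
  calc A = A * (N : ℝ) ^ (-δ) * (N : ℝ) ^ δ := by
        rw [mul_assoc, ← Real.rpow_add hNpos, neg_add_cancel, Real.rpow_zero, mul_one]
    _ ≤ N * (N : ℝ) ^ δ := by gcongr
    _ = (N : ℝ) ^ (1 + δ) := by rw [Real.rpow_add hNpos, Real.rpow_one]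

end

theorem tendsto_add_rpow_neg {v : ℕ → ℝ} {L δ : ℝ} (hδ : 0 < δ) (hvL : Tendsto v atTop (𝓝 L)) :
    Tendsto (fun n : ℕ => v n + (n : ℝ) ^ (-δ)) atTop (𝓝 L) := by
  simpa using hvL.add ((tendsto_rpow_neg_atTop hδ).comp tendsto_natCast_atTop_atTop)

section

variable {ι : Type*} {l : Filter ι} {A : ι → ℝ} {δ : ℝ} {m : ι → ℕ} {v : ℕ → ℝ}

theorem tendsto_stopIndex_atTop (hA : Tendsto A l atTop) (hδ : 0 ≤ δ) (hm : ∀ i, 1 ≤ m i)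
    (hv : ∀ n, 0 ≤ v n) (hvb : BddAbove (Set.range v)) :
    Tendsto (fun i => stopIndex (A i) δ (m i) v) l atTop := by
  have hpow : Tendsto (fun i => (stopIndex (A i) δ (m i) v : ℝ) ^ (1 + δ)) l atTop := by
    refine tendsto_atTop_mono' l ?_ hA
    filter_upwards [hA.eventually_ge_atTop 0] with i hAi
    exact le_rpow_stopIndex hAi (hm i) hv (stopSet_nonempty hAi hδ hvb)
  rw [← tendsto_natCast_atTop_iff (R := ℝ)]
  refine ((tendsto_rpow_atTop (y := (1 + δ)⁻¹) (by positivity)).comp hpow).congr fun i => ?_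
  exact Real.rpow_rpow_inv (Nat.cast_nonneg _) (by positivity)

theorem tendsto_stopIndex_div {L : ℝ} (hA : Tendsto A l atTop) (hδ : 0 < δ)
    (hm : ∀ i, 1 ≤ m i) (hm0 : Tendsto (fun i => (m i : ℝ) / A i) l (𝓝 0))
    (hv : ∀ n, 0 ≤ v n) (hvL : Tendsto v atTop (𝓝 L)) :
    Tendsto (fun i => (stopIndex (A i) δ (m i) v : ℝ) / A i) l (𝓝 L) := by
  set N := fun i => stopIndex (A i) δ (m i) v
  have hvb : BddAbove (Set.range v) := hvL.bddAbove_range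
  have hL : 0 ≤ L := ge_of_tendsto' hvL hv
  have hu := tendsto_add_rpow_neg hδ hvL
  have hN : Tendsto N l atTop := tendsto_stopIndex_atTop hA hδ.le hm hv hvb
  have hlower : Tendsto (fun i => v (N i) + (N i : ℝ) ^ (-δ)) l (𝓝 L) := hu.comp hN
  have hupper : Tendsto (fun i => max ((m i : ℝ) / A i)
      (v (N i - 1) + ((N i - 1 : ℕ) : ℝ) ^ (-δ) + 1 / A i)) l (𝓝 L) := by
    have h := hm0.max ((hu.comp ((tendsto_sub_atTop_nat 1).comp hN)).add
      ((tendsto_const_nhds (x := (1 : ℝ))).div_atTop hA))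
    rwa [add_zero, max_eq_right hL] at h
  refine tendsto_of_tendsto_of_tendsto_of_le_of_le' hlower hupper ?_ ?_ <;>
    filter_upwards [hA.eventually_gt_atTop 0] with i hAi
  · rw [le_div_iff₀ hAi, mul_comm]
    exact (stopIndex_mem (stopSet_nonempty hAi.le hδ.le hvb)).2
  · rw [div_le_iff₀ hAi, max_mul_of_nonneg _ _ hAi.le, div_mul_cancel₀ _ hAi.ne', add_mul,
      div_mul_cancel₀ _ hAi.ne', mul_comm]
    exact stopIndex_le_max

end

theorem stopping_index_asymptotic_general (a δ L : ℝ) (ha : 0 < a) (hδ : 0 < δ)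
    (v : ℕ → ℝ) (hv : ∀ n, 0 ≤ v n) (hvL : Tendsto v atTop (𝓝 L))
    (m : ℝ → ℕ) (hm : ∀ ω, 1 ≤ m ω)
    (hm0 : Tendsto (fun ω : ℝ => ω ^ 2 * (m ω : ℝ)) (𝓝[>] 0) (𝓝 0)) :
    Tendsto (fun ω : ℝ => ω ^ 2 * (stopIndex (a / ω ^ 2) δ (m ω) v : ℝ))
      (𝓝[>] 0) (𝓝 (a * L)) := by
  have hsq : Tendsto (fun ω : ℝ => ω ^ 2) (𝓝[>] 0) (𝓝[>] 0) := by
    refine tendsto_nhdsWithin_iff.2 ⟨?_, ?_⟩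
    · simpa using ((continuous_pow 2).tendsto (0 : ℝ)).mono_left nhdsWithin_le_nhds
    · filter_upwards [self_mem_nhdsWithin] with ω (hω : 0 < ω)
      exact pow_pos hω 2
  have hA : Tendsto (fun ω : ℝ => a / ω ^ 2) (𝓝[>] 0) atTop := by
    simpa [div_eq_mul_inv] using hsq.inv_tendsto_nhdsGT_zero.const_mul_atTop ha
  have hmA : Tendsto (fun ω : ℝ => (m ω : ℝ) / (a / ω ^ 2)) (𝓝[>] 0) (𝓝 0) := by
    simpa [div_div_eq_mul_div, mul_comm] using hm0.div_const a
  refine ((tendsto_stopIndex_div hA hδ hm hmA hv hvL).const_mul a).congr fun ω => ?_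
  rw [div_div_eq_mul_div, mul_div_cancel₀ _ ha.ne', mul_comm]

/-- Deterministic first-order efficiency: if `v_n → L > 0` and the pilot size
`m(ω)` satisfies `ω² m(ω) → 0` as `ω → 0⁺`, then the stopping index
`N(ω) = inf{ n : n ≥ m(ω), n ≥ (a/ω²)(v_n + n^{−δ}) }` satisfies
`ω² N(ω) → a L` as `ω → 0⁺`, i.e. `N(ω)/C(ω) → 1` with `C(ω) = a L/ω²`. -/
theorem stopping_index_asymptotic (a δ L : ℝ) (ha : 0 < a) (hδ : 0 < δ) (hL : 0 < L)
    (v : ℕ → ℝ) (hv : ∀ n, 0 ≤ v n) (hvL : Tendsto v atTop (𝓝 L))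
    (m : ℝ → ℕ) (hm : ∀ ω, 1 ≤ m ω)
    (hm0 : Tendsto (fun ω : ℝ => ω ^ 2 * (m ω : ℝ)) (𝓝[>] 0) (𝓝 0)) :
    Tendsto (fun ω : ℝ => ω ^ 2 * (stopIndex (a / ω ^ 2) δ (m ω) v : ℝ))
      (𝓝[>] 0) (𝓝 (a * L)) :=
  stopping_index_asymptotic_general a δ L ha hδ v hv hvL m hm hm0
end

section
/- Let (Ω, 𝒜, P) be a probability space, ξ² > 0, and let (V_n²)_{n≥1} be measurable functions V_n² : Ω → [0,∞) with V_n² → ξ² almost surely. Let a > 0, and let the pilot size t : (0,∞) → ℕ satisfy t(ω) → ∞ and ω² t(ω) → 0 as ω → 0⁺. For each ω > 0 define the two-stage sample size Q_ω(x) = max{ t(ω), ⌈ (a/ω²) V_{t(ω)}²(x) ⌉ } and C_ω = a ξ² / ω². Then for P-almost every x ∈ Ω, Q_ω(x)/C_ω → 1 as ω → 0⁺. -/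
open MeasureTheory Filter Topology

/-! `Q_ω` is squeezed between `(a/ω²) V_{t(ω)}` and `t(ω) + (a/ω²) V_{t(ω)} + 1`. Divided by `C_ω`
these bounds become `V_{t(ω)}/ξ²` and `V_{t(ω)}/ξ² + ω² t(ω)/(aξ²) + ω²/(aξ²)`; both tend to `1`
wherever `V_n → ξ²`, since `t(ω) → ∞` and `ω² t(ω) → 0`. -/

theorem le_max_natCast_ceil (n : ℕ) (y : ℝ) : y ≤ (max n ⌈y⌉₊ : ℝ) :=
  (Nat.le_ceil y).trans (le_max_right _ _)

theorem max_natCast_ceil_le {y : ℝ} (hy : 0 ≤ y) (n : ℕ) : (max n ⌈y⌉₊ : ℝ) ≤ n + y + 1 :=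
  max_le (by linarith) (by linarith [Nat.ceil_lt_add_one hy, n.cast_nonneg (α := ℝ)])

theorem tendsto_max_natCast_ceil_div {α : Type*} {l : Filter α} {n : α → ℕ} {y c : α → ℝ}
    (hc : ∀ᶠ i in l, 0 < c i) (hy : Tendsto (fun i => y i / c i) l (𝓝 1))
    (hn : Tendsto (fun i => (n i : ℝ) / c i) l (𝓝 0))
    (hc_inv : Tendsto (fun i => (c i)⁻¹) l (𝓝 0)) :
    Tendsto (fun i => (max (n i) ⌈y i⌉₊ : ℝ) / c i) l (𝓝 1) := by
  have hy_pos : ∀ᶠ i in l, 0 < y i := by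
    filter_upwards [hc, hy.eventually (lt_mem_nhds one_pos)] with i hci hyi
    exact (div_pos_iff_of_pos_right hci).mp hyi
  have hupper : Tendsto (fun i => (n i : ℝ) / c i + y i / c i + (c i)⁻¹) l (𝓝 1) := by
    simpa using (hn.add hy).add hc_inv
  refine tendsto_of_tendsto_of_tendsto_of_le_of_le' hy hupper ?_ ?_
  · filter_upwards [hc] with i hci
    exact div_le_div_of_nonneg_right (le_max_natCast_ceil _ _) hci.le
  · filter_upwards [hc, hy_pos] with i hci hyi
    calc (max (n i) ⌈y i⌉₊ : ℝ) / c i ≤ (n i + y i + 1) / c i :=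
          div_le_div_of_nonneg_right (max_natCast_ceil_le hyi.le _) hci.le
      _ = (n i : ℝ) / c i + y i / c i + (c i)⁻¹ := by ring

theorem two_stage_ratio_tendsto_ae_general {Ω : Type*} [MeasurableSpace Ω]
    (P : Measure Ω)
    (ξsq : ℝ) (hξ : 0 < ξsq)
    (V : ℕ → Ω → ℝ)
    (hVconv : ∀ᵐ x ∂P, Tendsto (fun n => V n x) atTop (𝓝 ξsq))
    (a : ℝ) (ha : 0 < a)
    (t : ℝ → ℕ) (ht : Tendsto t (𝓝[>] 0) atTop)
    (ht0 : Tendsto (fun ω : ℝ => ω ^ 2 * (t ω : ℝ)) (𝓝[>] 0) (𝓝 0)) :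
    ∀ᵐ x ∂P, Tendsto
      (fun ω : ℝ => (max (t ω) ⌈(a / ω ^ 2) * V (t ω) x⌉₊ : ℝ) /
        (a * ξsq / ω ^ 2))
      (𝓝[>] 0) (𝓝 1) := by
  filter_upwards [hVconv] with x hx
  have hω : ∀ᶠ ω in 𝓝[>] (0 : ℝ), 0 < ω := self_mem_nhdsWithin
  have hsq : Tendsto (fun ω : ℝ => ω ^ 2) (𝓝[>] 0) (𝓝 0) :=
    tendsto_nhdsWithin_of_tendsto_nhds ((continuous_pow 2).tendsto' 0 0 (zero_pow two_ne_zero))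
  refine tendsto_max_natCast_ceil_div (hω.mono fun ω hω => by positivity) ?_ ?_ ?_
  · have hratio : Tendsto (fun ω => V (t ω) x / ξsq) (𝓝[>] 0) (𝓝 1) := by
      simpa [hξ.ne'] using (hx.comp ht).div_const ξsq
    refine hratio.congr' (hω.mono fun ω hω => ?_)
    field_simp
  · have hpilot : Tendsto (fun ω : ℝ => ω ^ 2 * t ω / (a * ξsq)) (𝓝[>] 0) (𝓝 0) := by
      simpa using ht0.div_const (a * ξsq)
    refine hpilot.congr' (hω.mono fun ω hω => ?_)
    field_simp
  · simpa only [inv_div, zero_div] using hsq.div_const (a * ξsq)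

/-- Almost-sure first-order efficiency of the two-stage procedure: if
`V_n² → ξ²` almost surely, the pilot size `t(ω) → ∞` and `ω² t(ω) → 0` as
`ω → 0⁺`, then for `P`-almost every `x`, the two-stage sample size
`Q_ω(x) = max{ t(ω), ⌈(a/ω²) V_{t(ω)}²(x)⌉ }` satisfies `Q_ω(x)/C_ω → 1`
as `ω → 0⁺`, where `C_ω = a ξ²/ω²`. -/
theorem two_stage_ratio_tendsto_ae {Ω : Type*} [MeasurableSpace Ω]
    (P : Measure Ω) [IsProbabilityMeasure P]
    (ξsq : ℝ) (hξ : 0 < ξsq)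
    (V : ℕ → Ω → ℝ) (hVmeas : ∀ n, Measurable (V n)) (hVnonneg : ∀ n x, 0 ≤ V n x)
    (hVconv : ∀ᵐ x ∂P, Tendsto (fun n => V n x) atTop (𝓝 ξsq))
    (a : ℝ) (ha : 0 < a)
    (t : ℝ → ℕ) (ht : Tendsto t (𝓝[>] 0) atTop)
    (ht0 : Tendsto (fun ω : ℝ => ω ^ 2 * (t ω : ℝ)) (𝓝[>] 0) (𝓝 0)) :
    ∀ᵐ x ∂P, Tendsto
      (fun ω : ℝ => (max (t ω) ⌈(a / ω ^ 2) * V (t ω) x⌉₊ : ℝ) /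
        (a * ξsq / ω ^ 2))
      (𝓝[>] 0) (𝓝 1) :=
  two_stage_ratio_tendsto_ae_general P ξsq hξ V hVconv a ha t ht ht0
end

section
/- Let (Ω, 𝒜, P) be a probability space, ξ² > 0, and let (V_n²)_{n≥1} be measurable functions V_n² : Ω → [0,∞) with E[V_n²] < ∞ for every n and E[V_n²] → ξ² as n → ∞. Let a > 0, and let the pilot size t : (0,∞) → ℕ satisfy t(ω) → ∞ and ω² t(ω) → 0 as ω → 0⁺. For each ω > 0 define Q_ω(x) = max{ t(ω), ⌈ (a/ω²) V_{t(ω)}²(x) ⌉ } and C_ω = a ξ² / ω². Then E[Q_ω]/C_ω → 1 as ω → 0⁺, i.e. ω² E[Q_ω] → a ξ². -/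
/-!
Since `y ≤ ⌈y⌉₊ ≤ y + 1` for `y ≥ 0`, the final sample size is squeezed between
`(a/ω²) V_{t(ω)}²` and `t(ω) + (a/ω²) V_{t(ω)}² + 1`. Taking expectations and multiplying by
`ω²` gives `a E[V_{t(ω)}²] ≤ ω² E[Q_ω] ≤ ω² t(ω) + a E[V_{t(ω)}²] + ω²`, and both bounds tend
to `a ξ²` because `t(ω) → ∞` and `ω² t(ω) → 0`.
-/

open MeasureTheory Filter Topology

lemma le_max_natCast_natCeil (n : ℕ) (y : ℝ) : y ≤ max (n : ℝ) ⌈y⌉₊ :=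
  (Nat.le_ceil y).trans (le_max_right _ _)

lemma max_natCast_natCeil_le (n : ℕ) {y : ℝ} (hy : 0 ≤ y) : max (n : ℝ) ⌈y⌉₊ ≤ n + y + 1 :=
  max_le (by linarith) (by linarith [Nat.ceil_lt_add_one hy])

section IntegralMaxNatCeil

variable {Ω : Type*} [MeasurableSpace Ω] {P : Measure Ω} {f : Ω → ℝ}

lemma MeasureTheory.Integrable.max_natCast_natCeil [IsFiniteMeasure P] (hf : Integrable f P) (hf0 : 0 ≤ f)
    (n : ℕ) : Integrable (fun x => max (n : ℝ) ⌈f x⌉₊) P := by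
  have hmeas : AEStronglyMeasurable (fun x => max (n : ℝ) ⌈f x⌉₊) P :=
    (aemeasurable_const.max
      (measurable_from_nat.comp_aemeasurable
        (Nat.measurable_ceil.comp_aemeasurable hf.aemeasurable))).aestronglyMeasurable
  refine (((integrable_const (n : ℝ)).add hf).add (integrable_const 1)).mono' hmeas
    (ae_of_all _ fun x => ?_)
  rw [Real.norm_eq_abs, abs_of_nonneg ((Nat.cast_nonneg n).trans (le_max_left _ _))]
  exact max_natCast_natCeil_le n (hf0 x)

lemma integral_le_integral_max_natCast_natCeil [IsFiniteMeasure P] (hf : Integrable f P)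
    (hf0 : 0 ≤ f) (n : ℕ) : ∫ x, f x ∂P ≤ ∫ x, max (n : ℝ) ⌈f x⌉₊ ∂P :=
  integral_mono hf (hf.max_natCast_natCeil hf0 n) fun x => le_max_natCast_natCeil n (f x)

lemma integral_max_natCast_natCeil_le [IsProbabilityMeasure P] (hf : Integrable f P)
    (hf0 : 0 ≤ f) (n : ℕ) : ∫ x, max (n : ℝ) ⌈f x⌉₊ ∂P ≤ n + ∫ x, f x ∂P + 1 := by
  have hbound : ∫ x, max (n : ℝ) ⌈f x⌉₊ ∂P ≤ ∫ x, ((n : ℝ) + f x + 1) ∂P :=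
    integral_mono (hf.max_natCast_natCeil hf0 n)
      (((integrable_const (n : ℝ)).add hf).add (integrable_const 1))
      fun x => max_natCast_natCeil_le n (hf0 x)
  rwa [integral_add (f := fun x => (n : ℝ) + f x) ((integrable_const _).add hf)
    (integrable_const _), integral_add (integrable_const _) hf, integral_const, integral_const,
    probReal_univ, one_smul, one_smul] at hbound

lemma mul_integral_max_natCast_natCeil_mem_Icc [IsProbabilityMeasure P] {g : Ω → ℝ}
    (hg : Integrable g P) (hg0 : 0 ≤ g) {a : ℝ} (ha : 0 ≤ a) {ω : ℝ} (hω : ω ≠ 0) (n : ℕ) :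
    a * ∫ x, g x ∂P ≤ ω ^ 2 * ∫ x, max (n : ℝ) ⌈(a / ω ^ 2) * g x⌉₊ ∂P ∧
      ω ^ 2 * ∫ x, max (n : ℝ) ⌈(a / ω ^ 2) * g x⌉₊ ∂P ≤ ω ^ 2 * n + a * ∫ x, g x ∂P + ω ^ 2 := by
  have hω2 : 0 < ω ^ 2 := by positivity
  have hf := hg.const_mul (a / ω ^ 2)
  have hf0 : 0 ≤ fun x => (a / ω ^ 2) * g x := fun x => mul_nonneg (by positivity) (hg0 x)
  have lower := integral_le_integral_max_natCast_natCeil hf hf0 n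
  have upper := integral_max_natCast_natCeil_le hf hf0 n
  rw [integral_const_mul] at lower upper
  constructor
  · calc a * ∫ x, g x ∂P = ω ^ 2 * (a / ω ^ 2 * ∫ x, g x ∂P) := by field_simp
      _ ≤ _ := mul_le_mul_of_nonneg_left lower hω2.le
  · calc _ ≤ ω ^ 2 * (n + a / ω ^ 2 * ∫ x, g x ∂P + 1) := mul_le_mul_of_nonneg_left upper hω2.le
      _ = _ := by field_simp

end IntegralMaxNatCeil

theorem two_stage_expectation_ratio_tendsto_general {Ω : Type*} [MeasurableSpace Ω]
    (P : Measure Ω) [IsProbabilityMeasure P]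
    (ξsq : ℝ)
    (V : ℕ → Ω → ℝ) (hVnonneg : ∀ n x, 0 ≤ V n x)
    (hVint : ∀ n, Integrable (V n) P)
    (hVmean : Tendsto (fun n => ∫ x, V n x ∂P) atTop (𝓝 ξsq))
    (a : ℝ) (ha : 0 < a)
    (t : ℝ → ℕ) (ht : Tendsto t (𝓝[>] 0) atTop)
    (ht0 : Tendsto (fun ω : ℝ => ω ^ 2 * (t ω : ℝ)) (𝓝[>] 0) (𝓝 0)) :
    Tendsto
      (fun ω : ℝ => ω ^ 2 *
        ∫ x, (max (t ω) ⌈(a / ω ^ 2) * V (t ω) x⌉₊ : ℝ) ∂P)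
      (𝓝[>] 0) (𝓝 (a * ξsq)) := by
  have hmean : Tendsto (fun ω => a * ∫ x, V (t ω) x ∂P) (𝓝[>] 0) (𝓝 (a * ξsq)) :=
    (hVmean.comp ht).const_mul a
  have hsq : Tendsto (fun ω : ℝ => ω ^ 2) (𝓝[>] 0) (𝓝 0) := by
    simpa using ((continuous_pow 2).tendsto (0 : ℝ)).mono_left nhdsWithin_le_nhds
  have hupper : Tendsto (fun ω : ℝ => ω ^ 2 * (t ω : ℝ) + a * ∫ x, V (t ω) x ∂P + ω ^ 2)
      (𝓝[>] 0) (𝓝 (a * ξsq)) := by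
    simpa using (ht0.add hmean).add hsq
  have hbounds : ∀ᶠ ω in 𝓝[>] (0 : ℝ), _ :=
    eventually_mem_nhdsWithin.mono fun ω (hω : 0 < ω) =>
      mul_integral_max_natCast_natCeil_mem_Icc (hVint (t ω)) (hVnonneg (t ω)) ha.le hω.ne' (t ω)
  exact tendsto_of_tendsto_of_tendsto_of_le_of_le' hmean hupper
    (hbounds.mono fun _ h => h.1) (hbounds.mono fun _ h => h.2)

/-- Asymptotic first-order efficiency in expectation of the two-stage
procedure: if `E[V_n²] < ∞` for every `n` and `E[V_n²] → ξ²`, the pilot size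
`t(ω) → ∞` and `ω² t(ω) → 0` as `ω → 0⁺`, then the two-stage sample size
`Q_ω = max{ t(ω), ⌈(a/ω²) V_{t(ω)}²⌉ }` satisfies `E[Q_ω]/C_ω → 1` as
`ω → 0⁺`, i.e. `ω² E[Q_ω] → a ξ²`, where `C_ω = a ξ²/ω²`. -/
theorem two_stage_expectation_ratio_tendsto {Ω : Type*} [MeasurableSpace Ω]
    (P : Measure Ω) [IsProbabilityMeasure P]
    (ξsq : ℝ) (hξ : 0 < ξsq)
    (V : ℕ → Ω → ℝ) (hVmeas : ∀ n, Measurable (V n)) (hVnonneg : ∀ n x, 0 ≤ V n x)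
    (hVint : ∀ n, Integrable (V n) P)
    (hVmean : Tendsto (fun n => ∫ x, V n x ∂P) atTop (𝓝 ξsq))
    (a : ℝ) (ha : 0 < a)
    (t : ℝ → ℕ) (ht : Tendsto t (𝓝[>] 0) atTop)
    (ht0 : Tendsto (fun ω : ℝ => ω ^ 2 * (t ω : ℝ)) (𝓝[>] 0) (𝓝 0)) :
    Tendsto
      (fun ω : ℝ => ω ^ 2 *
        ∫ x, (max (t ω) ⌈(a / ω ^ 2) * V (t ω) x⌉₊ : ℝ) ∂P)
      (𝓝[>] 0) (𝓝 (a * ξsq)) :=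
  two_stage_expectation_ratio_tendsto_general P ξsq V hVnonneg hVint hVmean a ha t ht ht0
end

section
/- Let (Ω, 𝒜, P) be a probability space, G ∈ ℝ, and ξ > 0. Let (G_n)_{n≥1} be real-valued random variables such that Y_n := √n (G_n − G) converges in distribution to N(0, ξ²) and (Y_n) satisfies the uniform continuity in probability (u.c.i.p.) condition. Let (V_n)_{n≥1} be real-valued random variables with V_n → ξ almost surely. Let (n_k)_{k≥1} be positive integers with n_k → ∞ and let (N_k)_{k≥1} be measurable ℕ-valued random variables with N_k/n_k → 1 in probability as k → ∞. Then for every z > 0, P( √(N_k) |G_{N_k} − G| < z V_{N_k} ) → Φ(z) − Φ(−z) as k → ∞, where Φ is the cumulative distribution function of the standard normal law N(0,1); in particular, the coverage probability of the interval ( G_{N_k} − z V_{N_k}/√(N_k), G_{N_k} + z V_{N_k}/√(N_k) ) for G converges to Φ(z) − Φ(−z). -/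
/-!
Write `Y n = √n (G n - G)`. Along the deterministic indices `n k` the law of `Y (n k)` tends
to `N(0, ξ²)`. On the event `|N k / n k - 1| < ν` the random index `N k` lies within `ν n k` of
`n k`, so the u.c.i.p. condition makes `Y (N k) - Y (n k) → 0` in probability and `Y (N k)` has
the same limit law. Egorov's theorem turns `V n → ξ` a.s. into `V (N k) → ξ` in probability,
because `N k → ∞` in probability. By Slutsky's theorem `|Y (N k)| - z V (N k)` converges in
distribution to `|Z| - z ξ` with `Z ~ N(0, ξ²)`, and the portmanteau theorem applies to the event
`{· < 0}` because a nondegenerate Gaussian has no atoms at `±zξ`.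
-/

open MeasureTheory ProbabilityTheory Filter Topology

/-- The cumulative distribution function of the standard normal law `N(0,1)`. -/
noncomputable def stdNormalCDF (z : ℝ) : ℝ :=
  ((gaussianReal 0 1) (Set.Iic z)).toReal

lemma ENNReal.tendsto_nhds_zero_of_forall_ofReal {α : Type*} {l : Filter α} {u : α → ENNReal}
    (h : ∀ η : ℝ, 0 < η → ∀ᶠ a in l, u a ≤ ENNReal.ofReal η) : Tendsto u l (𝓝 0) := by
  refine ENNReal.tendsto_nhds_zero.2 fun δ hδ => ?_
  obtain ⟨η, -, hη, hηδ⟩ := ENNReal.lt_iff_exists_real_btwn.1 hδ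
  filter_upwards [h η (ENNReal.ofReal_pos.1 hη)] with a ha using ha.trans hηδ.le

lemma measurable_apply_of_measurable_index {Ω E : Type*} [MeasurableSpace Ω] [MeasurableSpace E]
    {Y : ℕ → Ω → E} (hY : ∀ n, Measurable (Y n)) {N : Ω → ℕ} (hN : Measurable N) :
    Measurable fun ω => Y (N ω) ω :=
  (measurable_from_prod_countable_left (f := fun p : Ω × ℕ => Y p.2 p.1) hY).comp
    (measurable_id.prodMk hN)

lemma abs_sub_le_mul_of_abs_div_sub_one_lt {a b ν : ℝ} (hb : 0 ≤ b) (hν : ν ≤ 1)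
    (h : |a / b - 1| < ν) : |a - b| ≤ ν * b := by
  rcases hb.eq_or_lt with rfl | hb
  · rw [div_zero, zero_sub, abs_neg, abs_one] at h
    linarith
  rw [show a - b = (a / b - 1) * b by field_simp, abs_mul, abs_of_pos hb]
  gcongr

lemma measure_map_abs_sub_const_frontier_Iio (μ : Measure ℝ) [NullSingletonClass μ] (c : ℝ) :
    μ.map (fun y => |y| - c) (frontier (Set.Iio 0)) = 0 := by
  rw [frontier_Iio, Measure.map_apply (by fun_prop) (measurableSet_singleton 0)]
  refine measure_mono_null (fun y hy => ?_) (((Set.finite_singleton c).insert (-c)).measure_zero _)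
  exact (eq_or_eq_neg_of_abs_eq (sub_eq_zero.1 hy)).symm

section

variable {Ω : Type*} [MeasurableSpace Ω] {P : Measure Ω} {ι : Type*} {l : Filter ι}

lemma tendsto_measure_lt_of_tendstoInMeasure_div {n : ι → ℕ} (hn : Tendsto n l atTop)
    {N : ι → Ω → ℕ} (hN : TendstoInMeasure P (fun k x => (N k x : ℝ) / n k) l 1) (m : ℕ) :
    Tendsto (fun k => P {x | N k x < m}) l (𝓝 0) := by
  rw [tendstoInMeasure_iff_dist] at hN
  refine tendsto_of_tendsto_of_tendsto_of_le_of_le' tendsto_const_nhds (hN (1 / 2) one_half_pos)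
    (Eventually.of_forall fun _ => zero_le) ?_
  filter_upwards [hn.eventually_ge_atTop (2 * m)] with k hk
  refine measure_mono fun x (hx : N k x < m) => ?_
  have hnk : (0 : ℝ) < n k := by exact_mod_cast (Nat.zero_lt_of_lt hx).trans_le (by omega)
  have hx' : (N k x : ℝ) + 1 ≤ m := by exact_mod_cast hx
  have hk' : 2 * (m : ℝ) ≤ n k := by exact_mod_cast hk
  have : (N k x : ℝ) / n k ≤ 1 / 2 := by
    rw [div_le_iff₀ hnk]; linarith
  show 1 / 2 ≤ dist ((N k x : ℝ) / n k) 1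
  rw [Real.dist_eq, abs_sub_comm, abs_of_nonneg (by linarith)]
  linarith

lemma tendstoInMeasure_apply_index_of_ae_tendsto [IsFiniteMeasure P] {E : Type*}
    [PseudoMetricSpace E] {V : ℕ → Ω → E} (hV : ∀ n, StronglyMeasurable (V n)) {c : E}
    (hVc : ∀ᵐ x ∂P, Tendsto (fun n => V n x) atTop (𝓝 c)) {N : ι → Ω → ℕ}
    (hN : ∀ m, Tendsto (fun k => P {x | N k x < m}) l (𝓝 0)) :
    TendstoInMeasure P (fun k x => V (N k x) x) l (fun _ => c) := by
  rw [tendstoInMeasure_iff_dist]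
  intro ε hε
  refine ENNReal.tendsto_nhds_zero_of_forall_ofReal fun η hη => ?_
  obtain ⟨t, -, htη, hunif⟩ :=
    tendstoUniformlyOn_of_ae_tendsto' hV stronglyMeasurable_const hVc (half_pos hη)
  obtain ⟨m, hm⟩ := eventually_atTop.1 (Metric.tendstoUniformlyOn_iff.1 hunif ε hε)
  filter_upwards [(hN m).eventually_le_const (ENNReal.ofReal_pos.2 (half_pos hη))] with k hk
  calc P {x | ε ≤ dist (V (N k x) x) c}
      ≤ P (t ∪ {x | N k x < m}) := measure_mono fun x hx => by
        by_contra h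
        simp only [Set.mem_union, Set.mem_ofPred_eq, not_or, not_lt] at h
        have := hm _ h.2 x h.1
        rw [dist_comm] at this
        exact not_le.2 this hx
    _ ≤ ENNReal.ofReal (η / 2) + ENNReal.ofReal (η / 2) :=
        (measure_union_le _ _).trans (add_le_add htη hk)
    _ = ENNReal.ofReal η := by rw [← ENNReal.ofReal_add (by positivity) (by positivity), add_halves]

lemma UCIP.tendstoInMeasure_sub {Y : ℕ → Ω → ℝ} (hY : UCIP P Y) {n : ι → ℕ}
    (hn : Tendsto n l atTop) {N : ι → Ω → ℕ}
    (hN : TendstoInMeasure P (fun k x => (N k x : ℝ) / n k) l 1) :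
    TendstoInMeasure P (fun k x => Y (N k x) x - Y (n k) x) l 0 := by
  rw [tendstoInMeasure_iff_dist] at hN ⊢
  intro ε hε
  refine ENNReal.tendsto_nhds_zero_of_forall_ofReal fun η hη => ?_
  obtain ⟨ν, ⟨hν₀, hν₁⟩, n₀, hUC⟩ := hY (min ε (η / 2)) (by positivity)
  filter_upwards [hn.eventually_ge_atTop n₀,
    (hN ν hν₀).eventually_le_const (ENNReal.ofReal_pos.2 (half_pos hη))] with k hk hNk
  calc P {x | ε ≤ dist (Y (N k x) x - Y (n k) x) 0}
      ≤ P ({x | ν ≤ dist ((N k x : ℝ) / n k) 1} ∪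
          {x | ∃ n' : ℕ, |(n' : ℝ) - n k| ≤ ν * n k ∧ min ε (η / 2) ≤ |Y n' x - Y (n k) x|}) :=
        measure_mono fun x (hx : ε ≤ dist _ 0) => by
          rw [Real.dist_eq, sub_zero] at hx
          by_cases hratio : ν ≤ dist ((N k x : ℝ) / n k) 1
          · exact Or.inl hratio
          · refine Or.inr ⟨N k x, ?_, (min_le_left _ _).trans hx⟩
            rw [not_le, Real.dist_eq] at hratio
            exact abs_sub_le_mul_of_abs_div_sub_one_lt (Nat.cast_nonneg _) hν₁.le hratio
    _ ≤ ENNReal.ofReal (η / 2) + ENNReal.ofReal (η / 2) :=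
        (measure_union_le _ _).trans <| add_le_add hNk <|
          (hUC _ hk).le.trans (ENNReal.ofReal_le_ofReal (min_le_right _ _))
    _ = ENNReal.ofReal η := by rw [← ENNReal.ofReal_add (by positivity) (by positivity), add_halves]

variable [IsProbabilityMeasure P]

section Distribution

variable {E : Type*} [MeasurableSpace E] [TopologicalSpace E] [OpensMeasurableSpace E]

lemma tendstoInDistribution_of_forall_integral_tendsto {X : ι → Ω → E}
    (hX : ∀ i, Measurable (X i)) {ν : Measure E} [IsProbabilityMeasure ν]
    (h : ∀ f : BoundedContinuousFunction E ℝ,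
      Tendsto (fun i => ∫ x, f (X i x) ∂P) l (𝓝 (∫ y, f y ∂ν))) :
    TendstoInDistribution X l id (fun _ => P) ν where
  forall_aemeasurable i := (hX i).aemeasurable
  tendsto := by
    refine ProbabilityMeasure.tendsto_iff_forall_integral_tendsto.2 fun f => ?_
    simp only [ProbabilityMeasure.coe_mk, Measure.map_id]
    simpa only [integral_map (hX _).aemeasurable f.continuous.aestronglyMeasurable] using h f

lemma MeasureTheory.TendstoInDistribution.tendsto_measureReal_preimage [HasOuterApproxClosed E]
    {Ω' : Type*} [MeasurableSpace Ω'] {ν : Measure Ω'} [IsProbabilityMeasure ν]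
    {X : ι → Ω → E} {Z : Ω' → E} (h : TendstoInDistribution X l Z (fun _ => P) ν)
    {S : Set E} (hS : MeasurableSet S) (hfr : ν.map Z (frontier S) = 0) :
    Tendsto (fun i => P.real (X i ⁻¹' S)) l (𝓝 ((ν.map Z).real S)) := by
  have := ProbabilityMeasure.tendsto_measure_of_null_frontier_of_tendsto' h.tendsto hfr
  simp only [ProbabilityMeasure.coe_mk, Measure.map_apply_of_aemeasurable
    (h.forall_aemeasurable _) hS] at this
  exact (ENNReal.tendsto_toReal (measure_ne_top _ _)).comp this

end Distribution

lemma tendsto_measureReal_abs_lt_mul [l.IsCountablyGenerated]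
    {ν : Measure ℝ} [IsProbabilityMeasure ν] [NullSingletonClass ν] {Y V : ι → Ω → ℝ}
    (hY : TendstoInDistribution Y l id (fun _ => P) ν) {c : ℝ}
    (hV : TendstoInMeasure P V l fun _ => c) (hVmeas : ∀ i, AEMeasurable (V i) P) (z : ℝ) :
    Tendsto (fun i => P.real {x | |Y i x| < z * V i x}) l (𝓝 (ν.real {y | |y| < z * c})) := by
  have hlim := (hY.continuous_comp_prodMk_of_tendstoInMeasure_const
    (g := fun p : ℝ × ℝ => |p.1| - z * p.2) (by fun_prop) hV hVmeas
    ).tendsto_measureReal_preimage measurableSet_Iio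
      (by exact measure_map_abs_sub_const_frontier_Iio ν (z * c))
  rw [map_measureReal_apply (by fun_prop) measurableSet_Iio] at hlim
  simpa only [Set.preimage, Set.mem_Iio, sub_neg, id] using hlim

end

lemma stdNormalCDF_sub_stdNormalCDF_neg {z : ℝ} (hz : 0 ≤ z) :
    stdNormalCDF z - stdNormalCDF (-z) = (gaussianReal 0 1).real (Set.Ioo (-z) z) := by
  have := nullSingletonClass_gaussianReal (μ := 0) one_ne_zero
  rw [measureReal_congr Ioo_ae_eq_Ioc, stdNormalCDF, stdNormalCDF, ← measureReal_def,
    ← measureReal_def, ← Set.Iic_sdiff_Iic, measureReal_sdiff (Set.Iic_subset_Iic.2 (by linarith))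
    measurableSet_Iic]

lemma gaussianReal_real_abs_lt_mul {σ : ℝ} (hσ : 0 < σ) (z : ℝ) :
    (gaussianReal 0 ⟨σ ^ 2, sq_nonneg σ⟩).real {y | |y| < z * σ} =
      (gaussianReal 0 1).real (Set.Ioo (-z) z) := by
  have hmap : (gaussianReal 0 1).map (σ * ·) = gaussianReal 0 ⟨σ ^ 2, sq_nonneg σ⟩ := by
    rw [gaussianReal_map_const_mul, mul_zero, mul_one]
    rfl
  rw [← hmap, map_measureReal_apply (measurable_const_mul σ)
    (measurableSet_lt (by fun_prop) (by fun_prop))]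
  congr 1
  ext y
  simp only [Set.mem_preimage, Set.mem_ofPred_eq, Set.mem_Ioo, abs_lt,
    ← neg_mul, mul_comm σ, mul_lt_mul_iff_left₀ hσ]

/-- Asymptotic consistency of the sequential confidence interval: if
`Y_n = √n (G_n − G)` converges in distribution to `N(0, ξ²)` and satisfies the
u.c.i.p. condition, `V_n → ξ` almost surely, and `N_k / n_k → 1` in probability
with `n_k → ∞`, then for every `z > 0`, the coverage probability
`P( √N_k |G_{N_k} − G| < z V_{N_k} )` of the interval
`(G_{N_k} − z V_{N_k}/√N_k, G_{N_k} + z V_{N_k}/√N_k)` converges to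
`Φ(z) − Φ(−z)`. -/
theorem sequential_coverage_probability {Ω : Type*} [MeasurableSpace Ω]
    (P : Measure Ω) [IsProbabilityMeasure P]
    (G : ℝ) (ξ : ℝ) (hξ : 0 < ξ)
    (Gn : ℕ → Ω → ℝ) (hGmeas : ∀ n, Measurable (Gn n))
    (hUCIP : UCIP P (fun n x => Real.sqrt n * (Gn n x - G)))
    (hconv : ∀ f : BoundedContinuousFunction ℝ ℝ,
      Tendsto (fun n : ℕ => ∫ x, f (Real.sqrt n * (Gn n x - G)) ∂P) atTop
        (𝓝 (∫ y, f y ∂(gaussianReal 0 ⟨ξ ^ 2, by positivity⟩))))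
    (V : ℕ → Ω → ℝ) (hVmeas : ∀ n, Measurable (V n))
    (hV : ∀ᵐ x ∂P, Tendsto (fun n => V n x) atTop (𝓝 ξ))
    (n : ℕ → ℕ) (hn : Tendsto n atTop atTop)
    (N : ℕ → Ω → ℕ) (hNmeas : ∀ k, Measurable (N k))
    (hN : ∀ ε : ℝ, 0 < ε →
      Tendsto (fun k => P {x | ε ≤ |(N k x : ℝ) / (n k : ℝ) - 1|}) atTop (𝓝 0)) :
    ∀ z : ℝ, 0 < z →
      Tendsto (fun k =>
          (P {x | Real.sqrt (N k x) * |Gn (N k x) x - G| < z * V (N k x) x}).toReal)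
        atTop (𝓝 (stdNormalCDF z - stdNormalCDF (-z))) := by
  intro z hz
  set Y : ℕ → Ω → ℝ := fun n x => Real.sqrt n * (Gn n x - G)
  have hYmeas (m : ℕ) : Measurable (Y m) := measurable_const.mul ((hGmeas m).sub measurable_const)
  -- `⟨ξ ^ 2, _⟩` elaborates to a `Subtype.mk`, which blocks instance search for `gaussianReal`.
  have : IsProbabilityMeasure (gaussianReal 0 ⟨ξ ^ 2, sq_nonneg ξ⟩) :=
    instIsProbabilityMeasureGaussianReal _ _
  have : NullSingletonClass (gaussianReal 0 ⟨ξ ^ 2, sq_nonneg ξ⟩) :=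
    nullSingletonClass_gaussianReal fun h => (pow_pos hξ 2).ne' (congrArg Subtype.val h)
  have hratio : TendstoInMeasure P (fun k x => (N k x : ℝ) / n k) atTop 1 :=
    tendstoInMeasure_iff_dist.2 hN
  have hYN : TendstoInDistribution (fun k x => Y (N k x) x) atTop id (fun _ => P)
      (gaussianReal 0 ⟨ξ ^ 2, sq_nonneg ξ⟩) :=
    tendstoInDistribution_of_tendstoInMeasure_sub _ _
      (tendstoInDistribution_of_forall_integral_tendsto (fun k => hYmeas (n k))
        fun f => (hconv f).comp hn)
      (hUCIP.tendstoInMeasure_sub hn hratio)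
      fun k => (measurable_apply_of_measurable_index hYmeas (hNmeas k)).aemeasurable
  have hVN : TendstoInMeasure P (fun k x => V (N k x) x) atTop fun _ => ξ :=
    tendstoInMeasure_apply_index_of_ae_tendsto (fun m => (hVmeas m).stronglyMeasurable) hV
      (tendsto_measure_lt_of_tendstoInMeasure_div hn hratio)
  have hcover := tendsto_measureReal_abs_lt_mul hYN hVN
    (fun k => (measurable_apply_of_measurable_index hVmeas (hNmeas k)).aemeasurable) z
  rw [stdNormalCDF_sub_stdNormalCDF_neg hz.le, ← gaussianReal_real_abs_lt_mul hξ]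
  simpa only [Y, measureReal_def, abs_mul, abs_of_nonneg (Real.sqrt_nonneg _)] using hcover
end
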